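/- Let g be a finite-dimensional complex nilpotent Lie algebra such that every basis of g contains an element x with ad(x)^4 ≠ 0 (i.e., g is not a pre-Engel-4 Lie algebra). Then g admits no periodic prederivation. -/

import Mathlib

/-!
A periodic endomorphism of a finite-dimensional complex vector space is diagonalizable, and all
its eigenvalues are roots of unity. If `P x = α • x` and `P w = β • w`, the prederivation identity
makes `ad(x)^4 w` an eigenvector of `P` with eigenvalue `4α + β`; since `|4α + β| ≠ 1` when
`|α| = |β| = 1`, it must vanish. Hence `ad(x)^4 = 0` for every eigenvector `x`, and a basis of
eigenvectors shows that the Lie algebra is pre-Engel-4.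
-/

/-- A prederivation of a Lie algebra. -/
def IsPrederivation {L : Type*} [LieRing L] [LieAlgebra ℂ L] (P : L →ₗ[ℂ] L) : Prop :=
  ∀ x y z : L, P ⁅x, ⁅y, z⁆⁆ = ⁅P x, ⁅y, z⁆⁆ + ⁅x, ⁅P y, z⁆⁆ + ⁅x, ⁅y, P z⁆⁆

namespace Module.End

variable {K V : Type*} [Field K] [AddCommGroup V] [Module K V] {f : End K V} {m : ℕ}

theorem isSemisimple_of_pow_eq_one (hm : (m : K) ≠ 0) (hf : f ^ m = 1) : f.IsSemisimple :=
  isSemisimple_of_squarefree_aeval_eq_zero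
    (Polynomial.X_pow_sub_one_separable_iff.mpr hm).squarefree (by simp [hf])

theorem iSup_eigenspace_eq_top_of_pow_eq_one [IsAlgClosed K] [FiniteDimensional K V]
    (hm : (m : K) ≠ 0) (hf : f ^ m = 1) : ⨆ μ : K, f.eigenspace μ = ⊤ :=
  (isSemisimple_of_pow_eq_one hm hf).iSup_eigenspace_eq_top

theorem HasEigenvector.pow_eq_one_of_pow_eq_one {μ : K} {v : V} (hv : f.HasEigenvector μ v)
    (hf : f ^ m = 1) : μ ^ m = 1 := by
  have h : μ ^ m • v = (1 : K) • v := by rw [← hv.pow_apply, hf, one_apply, one_smul]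
  exact smul_left_injective K hv.2 h

end Module.End

theorem Complex.norm_eq_one_of_apply_eq_smul {V : Type*} [AddCommGroup V] [Module ℂ V]
    {f : Module.End ℂ V} {m : ℕ} (hm : m ≠ 0) (hf : f ^ m = 1) {μ : ℂ} {v : V} (hv : v ≠ 0)
    (hfv : f v = μ • v) : ‖μ‖ = 1 :=
  Complex.norm_eq_one_of_pow_eq_one
    (Module.End.HasEigenvector.pow_eq_one_of_pow_eq_one
      ⟨Module.End.mem_eigenspace_iff.mpr hfv, hv⟩ hf) hm

theorem Complex.norm_four_mul_add_ne_one {α β : ℂ} (hα : ‖α‖ = 1) (hβ : ‖β‖ = 1) :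
    ‖4 * α + β‖ ≠ 1 := by
  intro h
  have : ‖4 * α‖ ≤ ‖4 * α + β‖ + ‖β‖ := by simpa using norm_sub_le (4 * α + β) β
  rw [norm_mul, hα, h, hβ] at this
  norm_num at this

theorem Module.Basis.exists_fin_forall_mem_of_top_le_span {K V : Type*} [Field K]
    [AddCommGroup V] [Module K V] [FiniteDimensional K V] {s : Set V}
    (hs : ⊤ ≤ Submodule.span K s) : ∃ (n : ℕ) (b : Basis (Fin n) K V), ∀ i, b i ∈ s :=
  ⟨_, (Basis.ofSpan hs).reindex (Finite.equivFin _),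
    fun i ↦ Basis.ofSpan_subset hs
      ⟨(Finite.equivFin _).symm i, by rw [Basis.reindex_apply, Basis.ofSpan_apply_self]⟩⟩

namespace IsPrederivation

variable {L : Type*} [LieRing L] [LieAlgebra ℂ L] {P : L →ₗ[ℂ] L}

theorem apply_lie_lie_of_eq_smul (hP : IsPrederivation P) {x w : L} {α β : ℂ}
    (hx : P x = α • x) (hw : P w = β • w) : P ⁅x, ⁅x, w⁆⁆ = (2 * α + β) • ⁅x, ⁅x, w⁆⁆ := by
  rw [hP, hx, hw]
  simp only [smul_lie, lie_smul]
  module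

theorem apply_ad_pow_four_of_eq_smul (hP : IsPrederivation P) {x w : L} {α β : ℂ}
    (hx : P x = α • x) (hw : P w = β • w) :
    P ((LieAlgebra.ad ℂ L x ^ 4) w) = (4 * α + β) • (LieAlgebra.ad ℂ L x ^ 4) w := by
  have h := hP.apply_lie_lie_of_eq_smul hx (hP.apply_lie_lie_of_eq_smul hx hw)
  simp only [pow_succ, pow_zero, one_mul, Module.End.mul_apply, LieAlgebra.ad_apply]
  rw [h]
  ring_nf

theorem ad_pow_four_eq_zero_of_eq_smul [FiniteDimensional ℂ L] (hP : IsPrederivation P) {m : ℕ}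
    (hm : m ≠ 0) (hPm : P ^ m = 1) {x : L} {α : ℂ} (hx : P x = α • x) :
    LieAlgebra.ad ℂ L x ^ 4 = 0 := by
  rw [← LinearMap.ker_eq_top, eq_top_iff,
    ← Module.End.iSup_eigenspace_eq_top_of_pow_eq_one (Nat.cast_ne_zero.mpr hm) hPm]
  refine iSup_le fun β ↦ ?_
  intro w hw
  rw [Module.End.mem_eigenspace_iff] at hw
  rw [LinearMap.mem_ker]
  by_contra hu
  have hx0 : x ≠ 0 := by rintro rfl; simp at hu
  have hw0 : w ≠ 0 := by rintro rfl; simp at hu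
  exact Complex.norm_four_mul_add_ne_one
    (Complex.norm_eq_one_of_apply_eq_smul hm hPm hx0 hx)
    (Complex.norm_eq_one_of_apply_eq_smul hm hPm hw0 hw)
    (Complex.norm_eq_one_of_apply_eq_smul hm hPm hu (hP.apply_ad_pow_four_of_eq_smul hx hw))

end IsPrederivation

theorem no_periodic_prederivation_of_not_preEngel4_general (L : Type*) [LieRing L]
    [LieAlgebra ℂ L] [FiniteDimensional ℂ L]
    (h : ∀ (ι : Type) (b : Module.Basis ι ℂ L), ∃ i : ι, (LieAlgebra.ad ℂ L (b i)) ^ 4 ≠ 0) :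
    ¬ ∃ P : L →ₗ[ℂ] L, IsPrederivation P ∧ ∃ m : ℕ, 1 ≤ m ∧ P ^ m = 1 := by
  rintro ⟨P, hP, m, hm, hPm⟩
  have hm0 : m ≠ 0 := by omega
  have hspan : ⊤ ≤ Submodule.span ℂ (⋃ μ : ℂ, (Module.End.eigenspace P μ : Set L)) := by
    simp only [Submodule.span_iUnion, Submodule.span_eq,
      Module.End.iSup_eigenspace_eq_top_of_pow_eq_one (Nat.cast_ne_zero.mpr hm0) hPm, le_refl]
  obtain ⟨n, b, hb⟩ := Module.Basis.exists_fin_forall_mem_of_top_le_span hspan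
  obtain ⟨i, hi⟩ := h _ b
  obtain ⟨α, hα⟩ := Set.mem_iUnion.mp (hb i)
  exact hi (hP.ad_pow_four_eq_zero_of_eq_smul hm0 hPm (Module.End.mem_eigenspace_iff.mp hα))

theorem no_periodic_prederivation_of_not_preEngel4 (L : Type*) [LieRing L]
    [LieAlgebra ℂ L] [FiniteDimensional ℂ L] [LieModule.IsNilpotent L L]
    (h : ∀ (ι : Type) (b : Module.Basis ι ℂ L), ∃ i : ι, (LieAlgebra.ad ℂ L (b i)) ^ 4 ≠ 0) :
    ¬ ∃ P : L →ₗ[ℂ] L, IsPrederivation P ∧ ∃ m : ℕ, 1 ≤ m ∧ P ^ m = 1 :=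
  no_periodic_prederivation_of_not_preEngel4_general L h
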